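/- arXiv:2507.06182 — 7 statements merged into one kernel-verified Lean document; each statement's English description precedes it below -/
import Mathlib

section
/- Given an index set I, an integer interval Z, a sequence i = (i_k)_{k ∈ Z} of elements of I, an integer c ∈ Z, and a finite sequence (E_k)_{1 ≤ k < l} of symbols in {L, R}, the recursively defined sequence of intervals 𝔠_1 = {c}, and 𝔠_k = [ã_{k-1} - 1, b̃_{k-1}} if E_{k-1} = L, 𝔠_k = {ã_{k-1}, b̃_{k-1} + 1] if E_{k-1} = R (where [ã_s, b̃_s] denotes the union of 𝔠_1, ..., 𝔠_s), is a chain of i-boxes: each 𝔠_k is an i-box, each partial union is an interval of length k, and each 𝔠_k is the largest i-box of its color contained in the partial union. -/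
open Classical

/-! Positive part `[x]_+ = max(x,0)`. -/
def intPos (x : ℤ) : ℤ := max x 0

/-! ## Matrix mutation (over an arbitrary index type) -/

/-- Fomin–Zelevinsky matrix mutation of `B` at index `s`. -/
def mutK {K : Type*} [DecidableEq K] (B : K → K → ℤ) (s x y : K) : ℤ :=
  if x = s ∨ y = s then - B x y
  else B x y + intPos (B x s) * intPos (B s y) - intPos (- B x s) * intPos (- B s y)

/-! ## The sequence `i` and occurrence operators -/

/-- `obelow i j y` is the largest `t ≤ y` with `i t = j`  (the operator `y(j)^⊖`). -/
noncomputable def obelow {I : Type*} (i : ℤ → I) (j : I) (y : ℤ) : ℤ :=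
  sSup {t : ℤ | t ≤ y ∧ i t = j}

/-- `oabove i j x` is the smallest `t ≥ x` with `i t = j`  (the operator `x(j)^⊕`). -/
noncomputable def oabove {I : Type*} (i : ℤ → I) (j : I) (x : ℤ) : ℤ :=
  sInf {t : ℤ | x ≤ t ∧ i t = j}

/-- Every letter occurring in `i` occurs (unboundedly) below and above every position;
this guarantees that all the operators `(-)^±, (-)^⊕, (-)^⊖` are well defined. -/
def OccAll {I : Type*} (i : ℤ → I) : Prop :=
  ∀ t x : ℤ, (∃ s, s ≤ x ∧ i s = i t) ∧ (∃ s, x ≤ s ∧ i s = i t)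

/-! ## Chains of i-boxes: abstract characterization -/

/-- `IsIBoxChain i l a b atil btil` says that the boxes `𝔠_k = [a k, b k]` (for `1 ≤ k ≤ l`)
form a chain of `i`-boxes with partial unions `[atil s, btil s]`:
each `𝔠_k` is an `i`-box, each partial union is an interval of length `s`,
and `𝔠_s` is the largest `i`-box of its color contained in the partial union. -/
structure IsIBoxChain {I : Type*} (i : ℤ → I) (l : ℕ) (a b atil btil : ℕ → ℤ) : Prop where
  ibox : ∀ k, 1 ≤ k → k ≤ l → a k ≤ b k ∧ i (a k) = i (b k)
  union_eq : ∀ s, 1 ≤ s → s ≤ l →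
    (⋃ k ∈ Set.Icc 1 s, Set.Icc (a k) (b k)) = Set.Icc (atil s) (btil s)
  union_len : ∀ s, 1 ≤ s → s ≤ l → btil s - atil s + 1 = (s : ℤ)
  largest : ∀ s, 1 ≤ s → s ≤ l → ∀ t, atil s ≤ t → t ≤ btil s → i t = i (a s) →
    a s ≤ t ∧ t ≤ b s

/-! ## Chains of i-boxes from a rooted sequence of expansion operators `(c, E)`
(`E m = true` encodes `L`, `E m = false` encodes `R`). -/

/-- Left end `ã_k` of the `k`-th partial union of the chain with data `(c, E)`. -/
def atilP (c : ℤ) (E : ℕ → Bool) (k : ℕ) : ℤ :=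
  c - ((Finset.Ico 1 k).filter (fun m => E m = true)).card

/-- Right end `b̃_k` of the `k`-th partial union of the chain with data `(c, E)`. -/
def btilP (c : ℤ) (E : ℕ → Bool) (k : ℕ) : ℤ :=
  c + ((Finset.Ico 1 k).filter (fun m => E m = false)).card

/-- Left end `a_k` of the `k`-th box of the chain with data `(c, E)`:
`𝔠_1 = {c}`, `𝔠_k = [ã_{k-1} - 1, b̃_{k-1}}` if `E (k-1) = L`, and
`𝔠_k = {ã_{k-1}, b̃_{k-1} + 1]` if `E (k-1) = R`. -/
noncomputable def aP {I : Type*} (i : ℤ → I) (c : ℤ) (E : ℕ → Bool) (k : ℕ) : ℤ :=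
  if k = 1 then c
  else if E (k - 1) then atilP c E k
  else oabove i (i (btilP c E k)) (atilP c E k)

/-- Right end `b_k` of the `k`-th box of the chain with data `(c, E)`. -/
noncomputable def bP {I : Type*} (i : ℤ → I) (c : ℤ) (E : ℕ → Bool) (k : ℕ) : ℤ :=
  if k = 1 then c
  else if E (k - 1) then obelow i (i (atilP c E k)) (btilP c E k)
  else btilP c E k

/-- The color of the `k`-th box of the chain with data `(c, E)`. -/
noncomputable def colorP {I : Type*} (i : ℤ → I) (c : ℤ) (E : ℕ → Bool) (k : ℕ) : I :=
  i (aP i c E k)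

/-- The sign `ε_k` of the `k`-th letter of the signed word associated to a chain:
`+1` if `k = 1` or `E_{k-1} = L`, and `-1` if `E_{k-1} = R`. -/
def epsP (E : ℕ → Bool) (k : ℕ) : ℤ :=
  if k = 1 ∨ E (k - 1) = true then 1 else -1

/-! ## Box moves -/

/-- The box move `ν_s` on the data `(c, E)` of a chain of i-boxes. -/
def nuMove (s : ℕ) (p : ℤ × (ℕ → Bool)) : ℤ × (ℕ → Bool) :=
  (if s = 1 then (if p.2 1 then p.1 - 1 else p.1 + 1) else p.1,
   fun k => if k = s - 1 ∨ k = s then !(p.2 k) else p.2 k)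

/-- `𝔠_s` is a movable box of the chain of length `l` with data `p = (c, E)`. -/
def Movable (l s : ℕ) (p : ℤ × (ℕ → Bool)) : Prop :=
  1 ≤ s ∧ s < l ∧ (s = 1 ∨ (2 ≤ s ∧ p.2 (s - 1) ≠ p.2 s))

/-- One box move (at some movable position) relating two chains. -/
def moveRel (l : ℕ) (p q : ℤ × (ℕ → Bool)) : Prop :=
  ∃ s, Movable l s p ∧ q = nuMove s p

/-- Two chain data `(c, E)`, `(c', E')` of length `l` describe the same chain:
same root and same expansion operators on the relevant range `[1, l-1]`. -/
def pairEqOn (l : ℕ) (p q : ℤ × (ℕ → Bool)) : Prop :=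
  p.1 = q.1 ∧ ∀ m, 1 ≤ m → m < l → p.2 m = q.2 m

/-! ## Signed words and the Berenstein–Fomin–Zelevinsky matrix -/

/-- `nxt h l k = k[1]`, the smallest `k' ∈ [k+1, l]` with `h k' = h k`, as an
element of `ℕ∞` (`⊤ = ∞` if there is none). -/
noncomputable def nxt {I : Type*} (h : ℕ → I) (l k : ℕ) : ℕ∞ :=
  sInf {x : ℕ∞ | ∃ k' : ℕ, x = (k' : ℕ∞) ∧ k < k' ∧ k' ≤ l ∧ h k' = h k}

/-- The exchangeable indices `K^ex` of a word of length `l` with letters `h`. -/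
def Kex {I : Type*} (h : ℕ → I) (l : ℕ) : Set ℕ :=
  {s | 1 ≤ s ∧ ∃ t, s < t ∧ t ≤ l ∧ h t = h s}

/-- BFZ case: `ε_{j[1]} = ε_k` and `j < k < j[1] < k[1]`. -/
noncomputable def condI {I : Type*} (ε : ℕ → ℤ) (h : ℕ → I) (l j k : ℕ) : Prop :=
  ∃ j1 : ℕ, nxt h l j = (j1 : ℕ∞) ∧ ε j1 = ε k ∧ j < k ∧ k < j1 ∧ (j1 : ℕ∞) < nxt h l k

/-- BFZ case: `ε_k = -ε_{k[1]}` and `j < k < k[1] < j[1]`. -/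
noncomputable def condII {I : Type*} (ε : ℕ → ℤ) (h : ℕ → I) (l j k : ℕ) : Prop :=
  ∃ k1 : ℕ, nxt h l k = (k1 : ℕ∞) ∧ ε k = - ε k1 ∧ j < k ∧ k < k1 ∧ (k1 : ℕ∞) < nxt h l j

/-- BFZ case: `ε_{k[1]} = ε_j` and `k < j < k[1] < j[1]`. -/
noncomputable def condIII {I : Type*} (ε : ℕ → ℤ) (h : ℕ → I) (l j k : ℕ) : Prop :=
  ∃ k1 : ℕ, nxt h l k = (k1 : ℕ∞) ∧ ε k1 = ε j ∧ k < j ∧ j < k1 ∧ (k1 : ℕ∞) < nxt h l j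

/-- BFZ case: `ε_j = -ε_{j[1]}` and `k < j < j[1] < k[1]`. -/
noncomputable def condIV {I : Type*} (ε : ℕ → ℤ) (h : ℕ → I) (l j k : ℕ) : Prop :=
  ∃ j1 : ℕ, nxt h l j = (j1 : ℕ∞) ∧ ε j = - ε j1 ∧ k < j ∧ j < j1 ∧ (j1 : ℕ∞) < nxt h l k

/-- The Berenstein–Fomin–Zelevinsky matrix `B̃(h)` of the signed word with letters `h`
and signs `ε` of length `l`, over the generalized Cartan matrix `C`. -/
noncomputable def Btilde {I : Type*} (C : I → I → ℤ) (ε : ℕ → ℤ) (h : ℕ → I)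
    (l j k : ℕ) : ℤ :=
  if nxt h l j = (k : ℕ∞) then ε k
  else if nxt h l k = (j : ℕ∞) then - ε j
  else if condI ε h l j k ∨ condII ε h l j k then ε k * C (h j) (h k)
  else if condIII ε h l j k ∨ condIV ε h l j k then - (ε j * C (h j) (h k))
  else 0

/-- The Kashiwara–Kim–Oh–Park initial exchange matrix `B(𝔠_-^{[a,b]})`
(for the word with letters `h k = i_{b-k+1}`, all signs being `+1`). -/
noncomputable def Binit {I : Type*} (C : I → I → ℤ) (h : ℕ → I) (l j k : ℕ) : ℤ :=
  if nxt h l j = (k : ℕ∞) then 1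
  else if nxt h l k = (j : ℕ∞) then -1
  else if j < k ∧ (k : ℕ∞) < nxt h l j ∧ nxt h l j < nxt h l k then C (h j) (h k)
  else if k < j ∧ (j : ℕ∞) < nxt h l k ∧ nxt h l k < nxt h l j then - C (h j) (h k)
  else 0

/-!
The partial union `[ã_k, b̃_k]` grows by one point at the left (for `L`) or at the right
(for `R`), so it has length `k`. The new box shares the new endpoint of the union, and its
other endpoint is the last (resp. first) occurrence of that endpoint's color in the union;
hence it is the largest box of its color there, and the union of the first `k` boxes is the
union of `[ã_{k-1}, b̃_{k-1}]` with an interval containing the new point.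
-/

def IsLargestIBoxIn {I : Type*} (i : ℤ → I) (a b x y : ℤ) : Prop :=
  x ≤ a ∧ a ≤ b ∧ b ≤ y ∧ i a = i b ∧
    ∀ t, x ≤ t → t ≤ y → i t = i a → a ≤ t ∧ t ≤ b

section Occurrences

variable {I : Type*} (i : ℤ → I)

theorem isLargestIBoxIn_singleton (x : ℤ) : IsLargestIBoxIn i x x x x :=
  ⟨le_rfl, le_rfl, le_rfl, rfl, fun _ h₁ h₂ _ => ⟨h₁, h₂⟩⟩

/-- The box `[x, y}`. -/
theorem isLargestIBoxIn_obelow {x y : ℤ} (hxy : x ≤ y) :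
    IsLargestIBoxIn i x (obelow i (i x) y) x y := by
  have hbdd : BddAbove {t : ℤ | t ≤ y ∧ i t = i x} := ⟨y, fun t ht => ht.1⟩
  have hne : {t : ℤ | t ≤ y ∧ i t = i x}.Nonempty := ⟨x, hxy, rfl⟩
  obtain ⟨hle, hcol⟩ := Int.csSup_mem hne hbdd
  exact ⟨le_rfl, le_csSup hbdd ⟨hxy, rfl⟩, hle, hcol.symm,
    fun t hxt hty ht => ⟨hxt, le_csSup hbdd ⟨hty, ht⟩⟩⟩

/-- The box `{x, y]`. -/
theorem isLargestIBoxIn_oabove {x y : ℤ} (hxy : x ≤ y) :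
    IsLargestIBoxIn i (oabove i (i y) x) y x y := by
  have hbdd : BddBelow {t : ℤ | x ≤ t ∧ i t = i y} := ⟨x, fun t ht => ht.1⟩
  have hne : {t : ℤ | x ≤ t ∧ i t = i y}.Nonempty := ⟨y, hxy, rfl⟩
  obtain ⟨hle, hcol⟩ := Int.csInf_mem hne hbdd
  refine ⟨hle, csInf_le hbdd ⟨hxy, rfl⟩, le_rfl, hcol, fun t hxt hty ht => ?_⟩
  exact ⟨csInf_le hbdd ⟨hxt, ht.trans hcol⟩, hty⟩

end Occurrences

section ChainData

variable {I : Type*} (i : ℤ → I) (c : ℤ) (E : ℕ → Bool)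

@[simp] theorem atilP_one : atilP c E 1 = c := by simp [atilP]

@[simp] theorem btilP_one : btilP c E 1 = c := by simp [btilP]

theorem atilP_succ {k : ℕ} (hk : 1 ≤ k) :
    atilP c E (k + 1) = atilP c E k - if E k then 1 else 0 := by
  unfold atilP
  rw [Nat.Ico_succ_right_eq_insert_Ico hk, Finset.filter_insert]
  cases E k <;> simp [Finset.card_insert_of_notMem, sub_sub]

theorem btilP_succ {k : ℕ} (hk : 1 ≤ k) :
    btilP c E (k + 1) = btilP c E k + if E k then 0 else 1 := by
  unfold btilP
  rw [Nat.Ico_succ_right_eq_insert_Ico hk, Finset.filter_insert]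
  cases E k <;> simp [Finset.card_insert_of_notMem, add_assoc]

theorem btilP_sub_atilP {k : ℕ} (hk : 1 ≤ k) : btilP c E k - atilP c E k + 1 = k := by
  induction k, hk using Nat.le_induction with
  | base => simp
  | succ k hk ih =>
    rw [atilP_succ c E hk, btilP_succ c E hk]
    cases E k <;> simp <;> omega

theorem atilP_le_btilP {k : ℕ} (hk : 1 ≤ k) : atilP c E k ≤ btilP c E k := by
  have := btilP_sub_atilP c E hk
  omega

theorem aP_of_left {k : ℕ} (hk : k ≠ 1) (hE : E (k - 1) = true) :
    aP i c E k = atilP c E k := by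
  simp [aP, hk, hE]

theorem bP_of_right {k : ℕ} (hk : k ≠ 1) (hE : E (k - 1) = false) :
    bP i c E k = btilP c E k := by
  simp [bP, hk, hE]

theorem isLargestIBoxIn_aP_bP {k : ℕ} (hk : 1 ≤ k) :
    IsLargestIBoxIn i (aP i c E k) (bP i c E k) (atilP c E k) (btilP c E k) := by
  obtain rfl | hk := hk.eq_or_lt
  · simpa [aP, bP] using isLargestIBoxIn_singleton i c
  have hk : k ≠ 1 := hk.ne'
  have hle := atilP_le_btilP c E (k := k) (by omega)
  cases hE : E (k - 1)
  · simpa [aP, bP, hk, hE] using isLargestIBoxIn_oabove i hle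
  · simpa [aP, bP, hk, hE] using isLargestIBoxIn_obelow i hle

theorem biUnion_Icc_aP_bP {s : ℕ} (hs : 1 ≤ s) :
    (⋃ k ∈ Set.Icc 1 s, Set.Icc (aP i c E k) (bP i c E k))
      = Set.Icc (atilP c E s) (btilP c E s) := by
  induction s, hs using Nat.le_induction with
  | base => simp [aP, bP]
  | succ s hs ih =>
    have hIcc : Set.Icc 1 (s + 1) = insert (s + 1) (Set.Icc 1 s) := by
      ext x; simp; omega
    rw [hIcc, Set.biUnion_insert, ih]
    obtain ⟨ha, hab, hb, -⟩ := isLargestIBoxIn_aP_bP i c E (k := s + 1) (by omega)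
    have hat := atilP_succ c E hs
    have hbt := btilP_succ c E hs
    have hle := atilP_le_btilP c E hs
    have hs1 : s + 1 ≠ 1 := by omega
    ext x
    simp only [Set.mem_union, Set.mem_Icc]
    cases hE : E s
    · have := bP_of_right i c E hs1 hE
      simp only [hE, Bool.false_eq_true, reduceIte] at hat hbt
      omega
    · have := aP_of_left i c E hs1 hE
      simp only [hE, reduceIte] at hat hbt
      omega

end ChainData

theorem pair_gives_chain_general {I : Type*} (i : ℤ → I)
    (c : ℤ) (E : ℕ → Bool) (l : ℕ) :
    IsIBoxChain i l (aP i c E) (bP i c E) (atilP c E) (btilP c E) := by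
  constructor
  · intro _ hk _
    obtain ⟨-, hab, -, hcol, -⟩ := isLargestIBoxIn_aP_bP i c E hk
    exact ⟨hab, hcol⟩
  · exact fun _ hs _ => biUnion_Icc_aP_bP i c E hs
  · exact fun _ hs _ => btilP_sub_atilP c E hs
  · exact fun _ hs _ => (isLargestIBoxIn_aP_bP i c E hs).2.2.2.2

/-- The recursively defined sequence of intervals attached to a root
`c` and a sequence of expansion operators `E` is a chain of `i`-boxes: each box is an
`i`-box, each partial union is an interval of length `k`, and each box is the largest
`i`-box of its color contained in the partial union. -/
theorem pair_gives_chain {I : Type*} (i : ℤ → I) (hocc : OccAll i)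
    (c : ℤ) (E : ℕ → Bool) (l : ℕ) (hl : 1 ≤ l) :
    IsIBoxChain i l (aP i c E) (bP i c E) (atilP c E) (btilP c E) :=
  pair_gives_chain_general i c E l
end

section
/- Let 𝔠 = (𝔠_k)_{1 ≤ k ≤ l} be a chain of i-boxes with 𝔠_s = [a_s, b_s] and partial unions [ã_s, b̃_s]. Then for every s, one has b_s ≤ b̃_s < b_s^+ and a_s^- < ã_s ≤ a_s, where s^+ (resp. s^-) denotes the next (resp. previous) position in the sequence i with the same letter as position s, taken to be ±∞ if none exists. Moreover, [ã_s, b̃_s] ⊆ [ã_t, b̃_t] whenever s < t. -/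
open Classical

/-! The bounds on `b̃_s` and `ã_s` come from maximality of `𝔠_s`: an occurrence of its letter
inside the partial union but beyond `b_s` (or before `a_s`) would give a larger box of the same
color there. Monotonicity holds because the partial unions are unions over growing index sets. -/

namespace IsIBoxChain

variable {I : Type*} {i : ℤ → I} {l : ℕ} {a b atil btil : ℕ → ℤ}

theorem Icc_subset_union (hc : IsIBoxChain i l a b atil btil) {s : ℕ} (hs1 : 1 ≤ s)
    (hsl : s ≤ l) : Set.Icc (a s) (b s) ⊆ Set.Icc (atil s) (btil s) := by
  rw [← hc.union_eq s hs1 hsl]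
  exact Set.subset_biUnion_of_mem (u := fun k => Set.Icc (a k) (b k)) ⟨hs1, le_rfl⟩

theorem union_mono (hc : IsIBoxChain i l a b atil btil) {s u : ℕ} (hs1 : 1 ≤ s)
    (hsu : s ≤ u) (hul : u ≤ l) : Set.Icc (atil s) (btil s) ⊆ Set.Icc (atil u) (btil u) := by
  rw [← hc.union_eq s hs1 (hsu.trans hul), ← hc.union_eq u (hs1.trans hsu) hul]
  exact Set.biUnion_subset_biUnion_left (Set.Icc_subset_Icc_right hsu)

theorem atil_le_btil (hc : IsIBoxChain i l a b atil btil) {s : ℕ} (hs1 : 1 ≤ s)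
    (hsl : s ≤ l) : atil s ≤ btil s := by
  have := hc.union_len s hs1 hsl
  omega

theorem btil_lt_of_lt (hc : IsIBoxChain i l a b atil btil) {s : ℕ} (hs1 : 1 ≤ s)
    (hsl : s ≤ l) {t : ℤ} (ht : b s < t) (hit : i t = i (b s)) : btil s < t := by
  obtain ⟨hab, hcol⟩ := hc.ibox s hs1 hsl
  have hb := hc.Icc_subset_union hs1 hsl (Set.right_mem_Icc.2 hab)
  by_contra! h
  have := (hc.largest s hs1 hsl t (hb.1.trans ht.le) h (hit.trans hcol.symm)).2
  omega

theorem lt_atil_of_lt (hc : IsIBoxChain i l a b atil btil) {s : ℕ} (hs1 : 1 ≤ s)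
    (hsl : s ≤ l) {t : ℤ} (ht : t < a s) (hit : i t = i (a s)) : t < atil s := by
  have ha := hc.Icc_subset_union hs1 hsl (Set.left_mem_Icc.2 (hc.ibox s hs1 hsl).1)
  by_contra! h
  have := (hc.largest s hs1 hsl t h (ht.le.trans ha.2) hit).1
  omega

end IsIBoxChain

/-- For a chain of `i`-boxes with boxes `[a_s, b_s]` and partial
unions `[ã_s, b̃_s]`: `b_s ≤ b̃_s < b_s^+` and `a_s^- < ã_s ≤ a_s` (the comparisons
with `b_s^+` resp. `a_s^-` are expressed by quantifying over later resp. earlier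
occurrences of the same letter), and partial unions are increasing. -/
theorem chain_union_bounds {I : Type*} (i : ℤ → I) (l : ℕ) (a b atil btil : ℕ → ℤ)
    (hchain : IsIBoxChain i l a b atil btil) (s : ℕ) (hs1 : 1 ≤ s) (hsl : s ≤ l) :
    (b s ≤ btil s ∧ ∀ t : ℤ, b s < t → i t = i (b s) → btil s < t) ∧
    (atil s ≤ a s ∧ ∀ t : ℤ, t < a s → i t = i (a s) → t < atil s) ∧
    (∀ u, s ≤ u → u ≤ l → atil u ≤ atil s ∧ btil s ≤ btil u) := by
  have hab := (hchain.ibox s hs1 hsl).1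
  have hbox := hchain.Icc_subset_union hs1 hsl
  refine ⟨⟨(hbox (Set.right_mem_Icc.2 hab)).2, fun t => hchain.btil_lt_of_lt hs1 hsl⟩,
    ⟨(hbox (Set.left_mem_Icc.2 hab)).1, fun t => hchain.lt_atil_of_lt hs1 hsl⟩,
    fun u hsu hul => ?_⟩
  exact (Set.Icc_subset_Icc_iff (hchain.atil_le_btil hs1 hsl)).1
    (hchain.union_mono hs1 hsu hul)
end

section
/- Let 𝔠 and 𝔠' be chains of i-boxes related by a box move at position s. If s ≥ 2, then i(𝔠'_s) = i(𝔠_{s+1}), i(𝔠'_{s+1}) = i(𝔠_s), and i(𝔠'_k) = i(𝔠_k) for all k ∉ {s, s+1}. If s = 1, then i(𝔠'_1) = i(𝔠_2), i(𝔠'_2) = i(𝔠_1), and i(𝔠'_k) = i(𝔠_k) for all k ≥ 3. -/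
/-!
The color of the box `𝔠_{k+1}` is that of the point which the expansion operator `E_k` adds
to the partial union `[ã_k, b̃_k]`. For `s ≥ 2` a movable box has `E_{s-1} ≠ E_s`, so the
box move just exchanges a left and a right expansion: the two added points are exchanged and
every partial union other than the `s`-th is unchanged. For `s = 1` the move puts the root on
the point `E_1` used to add and flips `E_1`, which then adds the old root; again
`[ã_2, b̃_2]` is unchanged, hence so are all later partial unions.
-/

open Classical

def expand (L : Bool) (J : ℤ × ℤ) : ℤ × ℤ :=
  if L then (J.1 - 1, J.2) else (J.1, J.2 + 1)

def expandedPoint (L : Bool) (J : ℤ × ℤ) : ℤ :=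
  if L then J.1 - 1 else J.2 + 1

lemma expand_comm (L L' : Bool) (J : ℤ × ℤ) :
    expand L (expand L' J) = expand L' (expand L J) := by
  cases L <;> cases L' <;> simp [expand]

lemma expandedPoint_expand_of_ne {L L' : Bool} (h : L ≠ L') (J : ℤ × ℤ) :
    expandedPoint L (expand L' J) = expandedPoint L J := by
  cases L <;> cases L' <;> simp_all [expand, expandedPoint]

lemma expandedPoint_not_expandedPoint (L : Bool) (c : ℤ) :
    expandedPoint (!L) (expandedPoint L (c, c), expandedPoint L (c, c)) = c := by
  cases L <;> simp [expandedPoint]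

lemma expand_not_expandedPoint (L : Bool) (c : ℤ) :
    expand (!L) (expandedPoint L (c, c), expandedPoint L (c, c)) = expand L (c, c) := by
  cases L <;> simp [expand, expandedPoint]

def partialUnion (c : ℤ) (E : ℕ → Bool) (k : ℕ) : ℤ × ℤ :=
  (atilP c E k, btilP c E k)

section partialUnion

variable (c : ℤ) (E : ℕ → Bool)

lemma partialUnion_one : partialUnion c E 1 = (c, c) := by
  simp [partialUnion, atilP, btilP]

lemma partialUnion_succ {k : ℕ} (hk : 1 ≤ k) :
    partialUnion c E (k + 1) = expand (E k) (partialUnion c E k) := by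
  have hIco : Finset.Ico 1 (k + 1) = insert k (Finset.Ico 1 k) :=
    Nat.Ico_succ_right_eq_insert_Ico hk
  cases hEk : E k <;>
    simp [partialUnion, expand, atilP, btilP, hIco, Finset.filter_insert, hEk] <;> ring

lemma partialUnion_congr_of_le {c' : ℤ} {E' : ℕ → Bool} {k₀ k : ℕ} (hk₀ : 1 ≤ k₀)
    (hk : k₀ ≤ k) (h₀ : partialUnion c E k₀ = partialUnion c' E' k₀)
    (hE : ∀ m, k₀ ≤ m → m < k → E m = E' m) :
    partialUnion c E k = partialUnion c' E' k := by
  induction k, hk using Nat.le_induction with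
  | base => exact h₀
  | succ n hn ih =>
    rw [partialUnion_succ c E (hk₀.trans hn), partialUnion_succ c' E' (hk₀.trans hn),
      ih fun m hm hmn => hE m hm (by omega), hE n hn (by omega)]

lemma partialUnion_congr {E' : ℕ → Bool} {k : ℕ}
    (hE : ∀ m, 1 ≤ m → m < k → E m = E' m) :
    partialUnion c E k = partialUnion c E' k := by
  rcases Nat.eq_zero_or_pos k with rfl | hk
  · rfl
  · exact partialUnion_congr_of_le c E le_rfl hk
      (by rw [partialUnion_one, partialUnion_one]) hE

end partialUnion

section colorP

variable {I : Type*} (i : ℤ → I) (c : ℤ) (E : ℕ → Bool)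

lemma colorP_one : colorP i c E 1 = i c := by
  simp [colorP, aP]

lemma i_oabove (hocc : OccAll i) (t x : ℤ) : i (oabove i (i t) x) = i t :=
  (Int.csInf_mem (hocc t x).2 ⟨x, fun _ hy => hy.1⟩).2

/-- The box `𝔠_{k+1}` has as one end the point that `E k` adds to `[ã_k, b̃_k]`. -/
lemma colorP_succ (hocc : OccAll i) {k : ℕ} (hk : 1 ≤ k) :
    colorP i c E (k + 1) = i (expandedPoint (E k) (partialUnion c E k)) := by
  have hU := partialUnion_succ c E hk
  have hk₀ : k ≠ 0 := by omega
  cases hEk : E k <;>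
    simp_all [colorP, aP, partialUnion, expand, expandedPoint, i_oabove i hocc]

end colorP

section swap

variable {I : Type*} (i : ℤ → I) (c : ℤ) (E : ℕ → Bool) {r : ℕ}

lemma nuMove_eq_comp_swap (hr : 1 ≤ r) (hne : E r ≠ E (r + 1)) :
    nuMove (r + 1) (c, E) = (c, E ∘ Equiv.swap r (r + 1)) := by
  have hne' : E (r + 1) = !E r := by cases h : E r <;> simp_all
  ext k
  · simp [nuMove, show r ≠ 0 by omega]
  · by_cases hk : k = r
    · subst hk; simp [nuMove, hne']
    by_cases hk' : k = r + 1
    · subst hk'; simp [nuMove, hne']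
    · simp [nuMove, hk, hk', Equiv.swap_apply_of_ne_of_ne hk hk']

lemma partialUnion_comp_swap (hr : 1 ≤ r) {k : ℕ} (hk : k ≠ r + 1) :
    partialUnion c (E ∘ Equiv.swap r (r + 1)) k = partialUnion c E k := by
  have hbelow : ∀ k ≤ r, partialUnion c (E ∘ Equiv.swap r (r + 1)) k = partialUnion c E k :=
    fun k hk => (partialUnion_congr c E fun m _ hm =>
      congrArg E (Equiv.swap_apply_of_ne_of_ne (by omega) (by omega)).symm).symm
  rcases Nat.lt_or_gt_of_ne hk with hk | hk
  · exact hbelow k (by omega)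
  · refine partialUnion_congr_of_le c _ (by omega) hk ?_ fun m hm _ =>
      congrArg E (Equiv.swap_apply_of_ne_of_ne (by omega) (by omega))
    rw [partialUnion_succ c _ (by omega), partialUnion_succ c _ hr,
      partialUnion_succ c E (by omega), partialUnion_succ c E hr, hbelow r le_rfl]
    simp [expand_comm]

lemma colorP_comp_swap_left (hocc : OccAll i) (hr : 1 ≤ r) (hne : E r ≠ E (r + 1)) :
    colorP i c (E ∘ Equiv.swap r (r + 1)) (r + 1) = colorP i c E (r + 2) := by
  rw [colorP_succ i c _ hocc hr, colorP_succ i c E hocc (by omega), partialUnion_succ c E hr,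
    partialUnion_comp_swap c E hr (by omega), expandedPoint_expand_of_ne hne.symm]
  simp

lemma colorP_comp_swap_right (hocc : OccAll i) (hr : 1 ≤ r) (hne : E r ≠ E (r + 1)) :
    colorP i c (E ∘ Equiv.swap r (r + 1)) (r + 2) = colorP i c E (r + 1) := by
  rw [colorP_succ i c _ hocc (by omega), colorP_succ i c E hocc hr, partialUnion_succ c _ hr,
    partialUnion_comp_swap c E hr (by omega)]
  simp [expandedPoint_expand_of_ne hne]

lemma colorP_comp_swap_of_ne (hocc : OccAll i) (hr : 1 ≤ r) {k : ℕ} (hk : 1 ≤ k)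
    (hk₁ : k ≠ r + 1) (hk₂ : k ≠ r + 2) :
    colorP i c (E ∘ Equiv.swap r (r + 1)) k = colorP i c E k := by
  obtain ⟨j, rfl⟩ : ∃ j, k = j + 1 := ⟨k - 1, by omega⟩
  rcases Nat.eq_zero_or_pos j with rfl | hj
  · rw [colorP_one, colorP_one]
  · rw [colorP_succ i c _ hocc hj, colorP_succ i c E hocc hj,
      partialUnion_comp_swap c E hr (by omega), Function.comp_apply,
      Equiv.swap_apply_of_ne_of_ne (by omega) (by omega)]

end swap

section moveOne

variable {I : Type*} (i : ℤ → I) (p : ℤ × (ℕ → Bool))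

lemma nuMove_one_fst : (nuMove 1 p).1 = expandedPoint (p.2 1) (p.1, p.1) := by
  cases h : p.2 1 <;> simp [nuMove, expandedPoint, h]

lemma nuMove_one_snd_one : (nuMove 1 p).2 1 = !p.2 1 := by
  simp [nuMove]

lemma nuMove_one_snd_of_two_le {m : ℕ} (hm : 2 ≤ m) : (nuMove 1 p).2 m = p.2 m := by
  simp only [nuMove]
  rw [if_neg (by omega)]

lemma partialUnion_nuMove_one {k : ℕ} (hk : 2 ≤ k) :
    partialUnion (nuMove 1 p).1 (nuMove 1 p).2 k = partialUnion p.1 p.2 k := by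
  refine partialUnion_congr_of_le _ _ one_le_two hk ?_
    fun m hm _ => nuMove_one_snd_of_two_le p hm
  rw [show 2 = 1 + 1 from rfl, partialUnion_succ _ _ le_rfl, partialUnion_succ _ _ le_rfl,
    partialUnion_one, partialUnion_one, nuMove_one_fst, nuMove_one_snd_one,
    expand_not_expandedPoint]

lemma colorP_nuMove_one_one (hocc : OccAll i) :
    colorP i (nuMove 1 p).1 (nuMove 1 p).2 1 = colorP i p.1 p.2 2 := by
  rw [colorP_one, colorP_succ i _ _ hocc le_rfl, partialUnion_one, nuMove_one_fst]

lemma colorP_nuMove_one_two (hocc : OccAll i) :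
    colorP i (nuMove 1 p).1 (nuMove 1 p).2 2 = colorP i p.1 p.2 1 := by
  rw [colorP_one, colorP_succ i _ _ hocc le_rfl, partialUnion_one, nuMove_one_fst,
    nuMove_one_snd_one, expandedPoint_not_expandedPoint]

lemma colorP_nuMove_one_of_three_le (hocc : OccAll i) {k : ℕ} (hk : 3 ≤ k) :
    colorP i (nuMove 1 p).1 (nuMove 1 p).2 k = colorP i p.1 p.2 k := by
  obtain ⟨j, rfl⟩ : ∃ j, k = j + 1 := ⟨k - 1, by omega⟩
  rw [colorP_succ i _ _ hocc (by omega), colorP_succ i _ _ hocc (by omega),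
    partialUnion_nuMove_one p (by omega), nuMove_one_snd_of_two_le p (by omega)]

end moveOne

/-- Colors under a box move: if `𝔠` and `𝔠' = ν_s 𝔠` are related by a
box move at position `s`, then for `s ≥ 2`: `i(𝔠'_s) = i(𝔠_{s+1})`,
`i(𝔠'_{s+1}) = i(𝔠_s)` and all other colors agree; for `s = 1`: `i(𝔠'_1) = i(𝔠_2)`,
`i(𝔠'_2) = i(𝔠_1)` and the colors agree for `k ≥ 3`. -/
theorem box_move_colors {I : Type*} (i : ℤ → I) (hocc : OccAll i)
    (l : ℕ) (p : ℤ × (ℕ → Bool)) (s : ℕ) (hmov : Movable l s p) :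
    (2 ≤ s →
      colorP i (nuMove s p).1 (nuMove s p).2 s = colorP i p.1 p.2 (s + 1) ∧
      colorP i (nuMove s p).1 (nuMove s p).2 (s + 1) = colorP i p.1 p.2 s ∧
      ∀ k, 1 ≤ k → k ≤ l → k ≠ s → k ≠ s + 1 →
        colorP i (nuMove s p).1 (nuMove s p).2 k = colorP i p.1 p.2 k) ∧
    (s = 1 →
      colorP i (nuMove s p).1 (nuMove s p).2 1 = colorP i p.1 p.2 2 ∧
      colorP i (nuMove s p).1 (nuMove s p).2 2 = colorP i p.1 p.2 1 ∧
      ∀ k, 3 ≤ k → k ≤ l →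
        colorP i (nuMove s p).1 (nuMove s p).2 k = colorP i p.1 p.2 k) := by
  obtain ⟨c, E⟩ := p
  obtain ⟨-, -, hs⟩ := hmov
  refine ⟨fun hs₂ => ?_, fun hs₁ => ?_⟩
  · obtain ⟨r, rfl⟩ : ∃ r, s = r + 1 := ⟨s - 1, by omega⟩
    have hr : 1 ≤ r := by omega
    have hne : E r ≠ E (r + 1) := by
      rcases hs with h | ⟨-, h⟩
      · omega
      · simpa using h
    rw [nuMove_eq_comp_swap c E hr hne]
    exact ⟨colorP_comp_swap_left i c E hocc hr hne, colorP_comp_swap_right i c E hocc hr hne,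
      fun k hk _ hk₁ hk₂ => colorP_comp_swap_of_ne i c E hocc hr hk hk₁ hk₂⟩
  · subst hs₁
    exact ⟨colorP_nuMove_one_one i _ hocc, colorP_nuMove_one_two i _ hocc,
      fun k hk _ => colorP_nuMove_one_of_three_le i _ hocc hk⟩
end

section
/- Any two chains of i-boxes with the same finite range [a, b] (a, b ∈ ℤ, a ≤ b) are related by a finite composition of box moves. -/
open Classical

/-! Box moves preserve the left end `ã_l` of the range: `ν_1` shifts the root and toggles
`E_1` together, and `ν_s` for `s ≥ 2` swaps an adjacent `L` and `R`. Conversely every chain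
can be moved to one with `E_m = R` for all `1 ≤ m < l`, by carrying the leftmost `L` down to
position `1` with moves `ν_s` and removing it with `ν_1`. Two such normal forms with the same
range have the same root, and box moves are involutions, so the reduction of one chain can
be followed by the reversed reduction of the other. -/

section BoxMoves

variable {l s : ℕ} {p q : ℤ × (ℕ → Bool)}

lemma nuMove_fst_of_ne_one (hs : s ≠ 1) (p : ℤ × (ℕ → Bool)) : (nuMove s p).1 = p.1 :=
  if_neg hs

lemma nuMove_snd_apply (s : ℕ) (p : ℤ × (ℕ → Bool)) (m : ℕ) :
    (nuMove s p).2 m = if m = s - 1 ∨ m = s then !p.2 m else p.2 m :=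
  rfl

lemma nuMove_involutive (s : ℕ) : Function.Involutive (nuMove s) := by
  intro p
  refine Prod.ext ?_ (funext fun m => ?_)
  · by_cases hs : s = 1
    · subst hs
      cases h : p.2 1 <;> simp [nuMove, h]
    · simp [nuMove_fst_of_ne_one hs]
  · simp only [nuMove_snd_apply]
    split_ifs <;> simp

lemma Movable.nuMove (hs : Movable l s p) : Movable l s (nuMove s p) := by
  obtain ⟨hs1, hsl, rfl | ⟨hs2, hne⟩⟩ := hs
  · exact ⟨hs1, hsl, Or.inl rfl⟩
  · refine ⟨hs1, hsl, Or.inr ⟨hs2, ?_⟩⟩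
    simpa [nuMove_snd_apply] using hne

lemma moveRel.symm (h : moveRel l p q) : moveRel l q p := by
  obtain ⟨s, hs, rfl⟩ := h
  exact ⟨s, hs.nuMove, (nuMove_involutive s p).symm⟩

instance (l : ℕ) : Std.Symm (moveRel l) := ⟨fun _ _ => moveRel.symm⟩

lemma pairEqOn.nuMove (h : pairEqOn l p q) (hs : s < l) :
    pairEqOn l (nuMove s p) (nuMove s q) := by
  obtain ⟨hc, hE⟩ := h
  refine ⟨?_, fun m hm1 hml => by simp only [nuMove_snd_apply, hE m hm1 hml]⟩
  by_cases hs1 : s = 1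
  · subst hs1
    simp only [_root_.nuMove, if_true, hc, hE 1 le_rfl hs]
  · rw [nuMove_fst_of_ne_one hs1, nuMove_fst_of_ne_one hs1, hc]

lemma pairEqOn.movable (h : pairEqOn l p q) (hs : Movable l s q) : Movable l s p := by
  obtain ⟨hs1, hsl, rfl | ⟨hs2, hne⟩⟩ := hs
  · exact ⟨hs1, hsl, Or.inl rfl⟩
  · refine ⟨hs1, hsl, Or.inr ⟨hs2, ?_⟩⟩
    rwa [h.2 (s - 1) (by omega) (by omega), h.2 s hs1 hsl]

lemma pairEqOn.exists_reflTransGen (h : pairEqOn l p q)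
    {r : ℤ × (ℕ → Bool)} (hqr : Relation.ReflTransGen (moveRel l) q r) :
    ∃ r', Relation.ReflTransGen (moveRel l) p r' ∧ pairEqOn l r' r := by
  induction hqr with
  | refl => exact ⟨p, .refl, h⟩
  | tail _ hstep ih =>
    obtain ⟨r', hpr', hr'⟩ := ih
    obtain ⟨s, hs, rfl⟩ := hstep
    exact ⟨_, hpr'.tail ⟨s, hr'.movable hs, rfl⟩, hr'.nuMove hs.2.1⟩

open Finset in
lemma atilP_nuMove (hs : Movable l s p) :
    atilP (nuMove s p).1 (nuMove s p).2 l = atilP p.1 p.2 l := by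
  obtain ⟨hs1, hsl, rfl | ⟨hs2, hne⟩⟩ := hs
  · have hrest : ∑ m ∈ Ico 2 l, (if (nuMove 1 p).2 m = true then 1 else 0)
        = ∑ m ∈ Ico 2 l, (if p.2 m = true then 1 else 0) :=
      sum_congr rfl fun m hm => by
        have hm' : ¬(m = 1 - 1 ∨ m = 1) := by rw [mem_Ico] at hm; omega
        rw [nuMove_snd_apply, if_neg hm']
    simp only [atilP, card_filter, sum_eq_sum_Ico_succ_bot hsl, hrest]
    cases h : p.2 1 <;> simp [nuMove, h] <;> ring
  · have hswap : (nuMove s p).2 = p.2 ∘ Equiv.swap (s - 1) s := by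
      funext m
      rw [nuMove_snd_apply, Function.comp_apply]
      by_cases h1 : m = s - 1
      · subst h1
        cases h : p.2 (s - 1) <;> cases h' : p.2 s <;> simp_all
      by_cases h2 : m = s
      · subst h2
        cases h : p.2 (m - 1) <;> cases h' : p.2 m <;> simp_all
      · simp [h1, h2, Equiv.swap_apply_of_ne_of_ne]
    have hsupp : {m | Equiv.swap (s - 1) s m ≠ m} ⊆ Ico 1 l := fun m hm => by
      have := Equiv.swap_apply_ne_self_iff.mp hm
      simp only [coe_Ico, Set.mem_Ico]
      omega
    simp only [atilP, card_filter, nuMove_fst_of_ne_one (show s ≠ 1 by omega), hswap,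
      Function.comp_apply, Equiv.Perm.sum_comp _ _ (fun m => if p.2 m then 1 else 0) hsupp]

lemma atilP_eq_of_reflTransGen (h : Relation.ReflTransGen (moveRel l) p q) :
    atilP q.1 q.2 l = atilP p.1 p.2 l := by
  induction h with
  | refl => rfl
  | tail _ hstep ih =>
    obtain ⟨s, hs, rfl⟩ := hstep
    rw [atilP_nuMove hs, ih]

lemma atilP_of_forall_false {c : ℤ} {E : ℕ → Bool}
    (hE : ∀ m, 1 ≤ m → m < l → E m = false) : atilP c E l = c := by
  simp only [atilP, sub_eq_self, Int.natCast_eq_zero, Finset.card_eq_zero,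
    Finset.filter_eq_empty_iff, Finset.mem_Ico, Bool.not_eq_true, and_imp]
  exact hE

lemma exists_reflTransGen_update_false (hs : 1 ≤ s) (hl : s < l) (hps : p.2 s = true)
    (hbelow : ∀ m, 1 ≤ m → m < s → p.2 m = false) :
    ∃ r, Relation.ReflTransGen (moveRel l) p r ∧
      ∀ m, 1 ≤ m → m < l → r.2 m = Function.update p.2 s false m := by
  induction s, hs using Nat.le_induction generalizing p with
  | base =>
    refine ⟨nuMove 1 p, .single ⟨1, ⟨le_rfl, hl, Or.inl rfl⟩, rfl⟩, fun m hm1 _ => ?_⟩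
    rcases (show m = 1 ∨ 1 < m by omega) with rfl | hm
    · simp [nuMove_snd_apply, hps]
    · rw [nuMove_snd_apply, if_neg (by omega), Function.update_of_ne (by omega)]
  | succ s hs ih =>
    have hprev : p.2 s = false := hbelow s hs (by omega)
    have hmov : Movable l (s + 1) p :=
      ⟨by omega, hl, Or.inr ⟨by omega, by simp [hprev, hps]⟩⟩
    obtain ⟨r, hr, hr_eq⟩ := ih (p := nuMove (s + 1) p) (by omega)
      (by simp [nuMove_snd_apply, hprev])
      (fun m hm1 hms => by rw [nuMove_snd_apply, if_neg (by omega)]; exact hbelow m hm1 (by omega))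
    refine ⟨r, .head ⟨s + 1, hmov, rfl⟩ hr, fun m hm1 hml => ?_⟩
    rw [hr_eq m hm1 hml]
    simp only [Function.update_apply, nuMove_snd_apply, Nat.add_sub_cancel]
    split_ifs <;> simp_all

end BoxMoves

lemma exists_reflTransGen_forall_false (l : ℕ) (p : ℤ × (ℕ → Bool)) :
    ∃ r, Relation.ReflTransGen (moveRel l) p r ∧
      ∀ m, 1 ≤ m → m < l → r.2 m = false := by
  suffices ∀ k ≤ l, ∃ r, Relation.ReflTransGen (moveRel l) p r ∧
      ∀ m, 1 ≤ m → m < k → r.2 m = false from this l le_rfl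
  intro k hk
  induction k with
  | zero => exact ⟨p, .refl, fun m _ hm => absurd hm (Nat.not_lt_zero m)⟩
  | succ k ih =>
    obtain ⟨r, hpr, hr⟩ := ih (by omega)
    by_cases hLk : 1 ≤ k ∧ r.2 k = true
    · obtain ⟨r', hrr', hr'⟩ :=
        exists_reflTransGen_update_false (l := l) hLk.1 (by omega) hLk.2 hr
      refine ⟨r', hpr.trans hrr', fun m hm1 hmk => ?_⟩
      rw [hr' m hm1 (by omega), Function.update_apply]
      split_ifs
      · rfl
      · exact hr m hm1 (by omega)
    · refine ⟨r, hpr, fun m hm1 hmk => ?_⟩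
      rcases (show m < k ∨ m = k by omega) with h | rfl
      · exact hr m hm1 h
      · simpa [hm1] using hLk

theorem chains_same_range_related_general
    (a b : ℤ) (l : ℕ)
    (p q : ℤ × (ℕ → Bool))
    (hp : atilP p.1 p.2 l = a ∧ btilP p.1 p.2 l = b)
    (hq : atilP q.1 q.2 l = a ∧ btilP q.1 q.2 l = b) :
    ∃ q', Relation.ReflTransGen (moveRel l) p q' ∧ pairEqOn l q' q := by
  obtain ⟨rp, hprp, hrp⟩ := exists_reflTransGen_forall_false l p
  obtain ⟨rq, hqrq, hrq⟩ := exists_reflTransGen_forall_false l q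
  have hrp_root : rp.1 = a :=
    (atilP_of_forall_false hrp).symm.trans ((atilP_eq_of_reflTransGen hprp).trans hp.1)
  have hrq_root : rq.1 = a :=
    (atilP_of_forall_false hrq).symm.trans ((atilP_eq_of_reflTransGen hqrq).trans hq.1)
  have hrprq : pairEqOn l rp rq :=
    ⟨hrp_root.trans hrq_root.symm, fun m h1 h2 => (hrp m h1 h2).trans (hrq m h1 h2).symm⟩
  obtain ⟨q', hrpq', hq'q⟩ := hrprq.exists_reflTransGen (symm hqrq)
  exact ⟨q', hprp.trans hrpq', hq'q⟩

/-- Any two chains of `i`-boxes with the same finite range `[a, b]`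
are related by a finite composition of box moves (up to the identification of chain
data agreeing on the relevant range). -/
theorem chains_same_range_related {I : Type*} (i : ℤ → I) (hocc : OccAll i)
    (a b : ℤ) (hab : a ≤ b) (l : ℕ) (hl : (l : ℤ) = b - a + 1)
    (p q : ℤ × (ℕ → Bool))
    (hp : atilP p.1 p.2 l = a ∧ btilP p.1 p.2 l = b)
    (hq : atilP q.1 q.2 l = a ∧ btilP q.1 q.2 l = b) :
    ∃ q', Relation.ReflTransGen (moveRel l) p q' ∧ pairEqOn l q' q :=
  chains_same_range_related_general a b l p q hp hq
end

section
/- Let C = (c_{ij})_{i,j ∈ I} be a generalized Cartan matrix with symmetrizer (d_i)_{i ∈ I} (positive integers with d_i c_{ij} = d_j c_{ji}). For any signed word h = (ε_k h_k)_{1 ≤ k ≤ l}, the l × l matrix B̃(h) defined by the Berenstein–Fomin–Zelevinsky formula is skew-symmetrizable with skew-symmetrizer the diagonal matrix D̃ with entries D̃_{kk} = d_{h_k}; that is, d_{h_j} B̃(h)_{jk} = − d_{h_k} B̃(h)_{kj} for all j, k. -/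
open Classical

/-! The BFZ cases come in pairs exchanged by swapping `j` and `k` (`k = j[1]` with `j = k[1]`,
cases I/II with III/IV), with the sign of the entry flipped; so skew-symmetrizability reduces to
`h_j = h_k` in the first pair and to the symmetrizer identity `d_i c_ij = d_j c_ji` in the others. -/

section Btilde

variable {I : Type*} {ε : ℕ → ℤ} {h : ℕ → I} {l j k : ℕ}

lemma nxt_eq_coe_spec (hjk : nxt h l j = (k : ℕ∞)) : j < k ∧ k ≤ l ∧ h k = h j := by
  have hne : {x : ℕ∞ | ∃ k' : ℕ, x = (k' : ℕ∞) ∧ j < k' ∧ k' ≤ l ∧ h k' = h j}.Nonempty := by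
    by_contra hempty
    rw [Set.not_nonempty_iff_eq_empty] at hempty
    rw [nxt, hempty, sInf_empty] at hjk
    exact WithTop.coe_ne_top hjk.symm
  have hmem := csInf_mem hne
  rw [← nxt, hjk] at hmem
  obtain ⟨k', hk', hjk', hk'l, hhk'⟩ := hmem
  obtain rfl : k = k' := by exact_mod_cast hk'
  exact ⟨hjk', hk'l, hhk'⟩

lemma Btilde_of_nxt_eq (C : I → I → ℤ) (ε : ℕ → ℤ) (hjk : nxt h l j = (k : ℕ∞)) :
    Btilde C ε h l j k = ε k := by
  rw [Btilde, if_pos hjk]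

lemma Btilde_swap_of_nxt_eq (C : I → I → ℤ) (ε : ℕ → ℤ) (hjk : nxt h l j = (k : ℕ∞)) :
    Btilde C ε h l k j = -ε k := by
  have hkj : nxt h l k ≠ (j : ℕ∞) := fun hkj ↦
    (nxt_eq_coe_spec hjk).1.asymm (nxt_eq_coe_spec hkj).1
  rw [Btilde, if_neg hkj, if_pos hjk]

lemma condIII_or_condIV_iff_swap :
    condIII ε h l k j ∨ condIV ε h l k j ↔ condI ε h l j k ∨ condII ε h l j k :=
  Iff.rfl

lemma lt_of_condI_or_condII (hjk : condI ε h l j k ∨ condII ε h l j k) : j < k := by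
  rcases hjk with ⟨_, _, _, hjk, _⟩ | ⟨_, _, _, hjk, _⟩ <;> exact hjk

end Btilde

theorem Btilde_skew_symmetrizable_general {I : Type*} (C : I → I → ℤ)
    (d : I → ℤ) (hsym : ∀ x y, d x * C x y = d y * C y x)
    (l : ℕ) (ε : ℕ → ℤ) (h : ℕ → I)
    (j k : ℕ) :
    d (h j) * Btilde C ε h l j k = -(d (h k) * Btilde C ε h l k j) := by
  by_cases hjk : nxt h l j = (k : ℕ∞)
  · rw [Btilde_of_nxt_eq C ε hjk, Btilde_swap_of_nxt_eq C ε hjk, (nxt_eq_coe_spec hjk).2.2]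
    ring
  by_cases hkj : nxt h l k = (j : ℕ∞)
  · rw [Btilde_of_nxt_eq C ε hkj, Btilde_swap_of_nxt_eq C ε hkj, (nxt_eq_coe_spec hkj).2.2]
    ring
  simp only [Btilde, if_neg hjk, if_neg hkj, condIII_or_condIV_iff_swap]
  split_ifs with crossing_jk crossing_kj
  · exact absurd (lt_of_condI_or_condII crossing_jk) (lt_of_condI_or_condII crossing_kj).asymm
  · linear_combination ε k * hsym (h j) (h k)
  · linear_combination -ε j * hsym (h j) (h k)
  · ring

/-- For a generalized Cartan matrix `C` with symmetrizer `d` and any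
signed word `(ε_k h_k)_{1 ≤ k ≤ l}`, the BFZ matrix `B̃(h)` is skew-symmetrizable with
skew-symmetrizer `diag(d_{h_1}, …, d_{h_l})`. -/
theorem Btilde_skew_symmetrizable {I : Type*} (C : I → I → ℤ)
    (hC2 : ∀ x, C x x = 2) (hCneg : ∀ x y, x ≠ y → C x y ≤ 0)
    (d : I → ℤ) (hd : ∀ x, 0 < d x) (hsym : ∀ x y, d x * C x y = d y * C y x)
    (l : ℕ) (ε : ℕ → ℤ) (h : ℕ → I)
    (hε : ∀ k, 1 ≤ k → k ≤ l → ε k = 1 ∨ ε k = -1)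
    (j k : ℕ) (hj1 : 1 ≤ j) (hjl : j ≤ l) (hk1 : 1 ≤ k) (hkl : k ≤ l) :
    d (h j) * Btilde C ε h l j k = -(d (h k) * Btilde C ε h l k j) :=
  Btilde_skew_symmetrizable_general C d hsym l ε h j k
end

section
/- Left reflection preserves the exchange matrix of a signed word: if h = (h_1, h_2, ..., h_l) is a signed word on the index set of a generalized Cartan matrix and h' = (−h_1, h_2, ..., h_l) is obtained by negating the sign of the first letter, then B(h') = B(h), where B denotes the restriction of B̃ to columns in K^ex. -/
open Classical

/-! Every entry `b̃_{jk}` reads the signs only at positions beyond `min j k` (at `k`, `j`,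
`j[1]` or `k[1]`), and for `j, k ≥ 1` position `1` is never one of them. -/

section SignCongr

variable {I : Type*} {ε ε' : ℕ → ℤ} {h : ℕ → I} {l j k : ℕ}

theorem lt_of_nxt_eq (hjk : nxt h l j = (k : ℕ∞)) : j < k := by
  have hle : ((j + 1 : ℕ) : ℕ∞) ≤ nxt h l j :=
    le_sInf fun _ ⟨_, hx, hjk', _⟩ => hx ▸ by exact_mod_cast hjk'
  rw [hjk] at hle
  exact_mod_cast hle

theorem condI_congr (hε : ∀ m, j < m → ε m = ε' m) :
    condI ε h l j k ↔ condI ε' h l j k := by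
  unfold condI
  constructor <;> rintro ⟨j1, h1, h2, h3, h4, h5⟩ <;> refine ⟨j1, h1, ?_, h3, h4, h5⟩
  · rwa [← hε j1 (h3.trans h4), ← hε k h3]
  · rwa [hε j1 (h3.trans h4), hε k h3]

theorem condII_congr (hε : ∀ m, j < m → ε m = ε' m) :
    condII ε h l j k ↔ condII ε' h l j k := by
  unfold condII
  constructor <;> rintro ⟨k1, h1, h2, h3, h4, h5⟩ <;> refine ⟨k1, h1, ?_, h3, h4, h5⟩
  · rwa [← hε k1 (h3.trans h4), ← hε k h3]
  · rwa [hε k1 (h3.trans h4), hε k h3]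

theorem condIII_congr (hε : ∀ m, k < m → ε m = ε' m) :
    condIII ε h l j k ↔ condIII ε' h l j k := by
  unfold condIII
  constructor <;> rintro ⟨k1, h1, h2, h3, h4, h5⟩ <;> refine ⟨k1, h1, ?_, h3, h4, h5⟩
  · rwa [← hε k1 (h3.trans h4), ← hε j h3]
  · rwa [hε k1 (h3.trans h4), hε j h3]

theorem condIV_congr (hε : ∀ m, k < m → ε m = ε' m) :
    condIV ε h l j k ↔ condIV ε' h l j k := by
  unfold condIV
  constructor <;> rintro ⟨j1, h1, h2, h3, h4, h5⟩ <;> refine ⟨j1, h1, ?_, h3, h4, h5⟩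
  · rwa [← hε j1 (h3.trans h4), ← hε j h3]
  · rwa [hε j1 (h3.trans h4), hε j h3]

theorem Btilde_congr_sign (C : I → I → ℤ) (hε : ∀ m, min j k < m → ε m = ε' m) :
    Btilde C ε h l j k = Btilde C ε' h l j k := by
  have hεj : ∀ m, j < m → ε m = ε' m := fun m hm => hε m (by omega)
  have hεk : ∀ m, k < m → ε m = ε' m := fun m hm => hε m (by omega)
  unfold Btilde
  rw [condI_congr hεj, condII_congr hεj, condIII_congr hεk, condIV_congr hεk]
  split_ifs with hjk hkj hI hIII
  · exact hεj k (lt_of_nxt_eq hjk)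
  · rw [hεk j (lt_of_nxt_eq hkj)]
  · have hjk : j < k := hI.elim (fun ⟨_, _, _, hjk, _⟩ => hjk) fun ⟨_, _, _, hjk, _⟩ => hjk
    rw [hεj k hjk]
  · have hkj : k < j := hIII.elim (fun ⟨_, _, _, hkj, _⟩ => hkj) fun ⟨_, _, _, hkj, _⟩ => hkj
    rw [hεk j hkj]
  · rfl

end SignCongr

theorem left_reflection_B_general {I : Type*} (C : I → I → ℤ)
    (l : ℕ) (ε : ℕ → ℤ) (h : ℕ → I) :
    ∀ j k, 1 ≤ j → j ≤ l → k ∈ Kex h l →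
      Btilde C (Function.update ε 1 (- ε 1)) h l j k = Btilde C ε h l j k := by
  intro j k hj _ hk
  refine Btilde_congr_sign C fun m hm => Function.update_of_ne ?_ _ _
  have := hk.1
  omega

/-- Left reflection preserves the exchange matrix of a signed word:
negating the sign of the first letter does not change `B(h)` (the restriction of
`B̃(h)` to columns in `K^ex`). -/
theorem left_reflection_B {I : Type*} (C : I → I → ℤ)
    (hC2 : ∀ x, C x x = 2) (hCneg : ∀ x y, x ≠ y → C x y ≤ 0)
    (l : ℕ) (ε : ℕ → ℤ) (h : ℕ → I)
    (hε : ∀ k, 1 ≤ k → k ≤ l → ε k = 1 ∨ ε k = -1) :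
    ∀ j k, 1 ≤ j → j ≤ l → k ∈ Kex h l →
      Btilde C (Function.update ε 1 (- ε 1)) h l j k = Btilde C ε h l j k :=
  left_reflection_B_general C l ε h
end

section
/- Stabilization of exchange matrices for infinite chains: let 𝔠 = (𝔠_k)_{k ≥ 1} be a chain of i-boxes of infinite length, and for s ≥ 1 let 𝔠_s denote the subchain (𝔠_k)_{1 ≤ k ≤ s}. Then for any s ≥ 1 and any (i, j) ∈ K(𝔠_s) × K^ex(𝔠_s), one has B(𝔠_t)_{ij} = B(𝔠_s)_{ij} for all t ≥ s. Consequently the colimit matrix B(𝔠) with B(𝔠)|_{K(𝔠_s) × K^ex(𝔠_s)} = B(𝔠_s) is well defined. -/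
open Classical

/-!
The entry `B̃_{xy}` of a word of length `l` depends on `l` only through `x[1]` and `y[1]`.
If `y[1] ≤ s` already in the word of length `s`, then `y[1]` does not change when the word
is extended to length `t ≥ s`, while `x[1]` either does not change either, or is `> s` both
before and after. In the latter case `y[1] < x[1]` excludes every case of the BFZ formula in
which the exact value of `x[1]` matters.
-/

section nxt

variable {I : Type*} {h : ℕ → I}

lemma nxt_le_of_mem {l k m : ℕ} (hkm : k < m) (hml : m ≤ l) (hm : h m = h k) :
    nxt h l k ≤ m :=
  sInf_le ⟨m, rfl, hkm, hml, hm⟩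

lemma lt_nxt (l k : ℕ) : (k : ℕ∞) < nxt h l k := by
  refine lt_of_lt_of_le (ENat.natCast_lt_natCast.mpr k.lt_succ_self) (le_sInf ?_)
  rintro x ⟨k', rfl, hkk', -, -⟩
  exact_mod_cast hkk'

lemma nxt_anti {s t k : ℕ} (hst : s ≤ t) : nxt h t k ≤ nxt h s k := by
  apply sInf_le_sInf
  rintro x ⟨k', rfl, hkk', hk's, hk'⟩
  exact ⟨k', rfl, hkk', hk's.trans hst, hk'⟩

lemma nxt_le_or_lt_nxt (s t k : ℕ) : nxt h s k ≤ s ∨ (s : ℕ∞) < nxt h t k := by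
  by_cases hocc : ∃ m, k < m ∧ m ≤ s ∧ h m = h k
  · obtain ⟨m, hkm, hms, hm⟩ := hocc
    exact .inl ((nxt_le_of_mem hkm hms hm).trans (by exact_mod_cast hms))
  · refine .inr (lt_of_lt_of_le (ENat.natCast_lt_natCast.mpr s.lt_succ_self) (le_sInf ?_))
    rintro x ⟨m, rfl, hkm, -, hm⟩
    exact_mod_cast Nat.succ_le_of_lt (not_le.mp fun hms => hocc ⟨m, hkm, hms, hm⟩)

lemma nxt_eq_of_le {s t k : ℕ} (hst : s ≤ t) (hk : nxt h s k ≤ s) :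
    nxt h t k = nxt h s k := by
  refine le_antisymm (nxt_anti hst) (le_sInf ?_)
  rintro x ⟨m, rfl, hkm, -, hm⟩
  by_cases hms : m ≤ s
  · exact nxt_le_of_mem hkm hms hm
  · exact hk.trans (by exact_mod_cast (not_le.mp hms).le)

end nxt

namespace Btilde

variable {I : Type*} {h : ℕ → I} (C : I → I → ℤ) (ε : ℕ → ℤ)

lemma congr_nxt {l l' x y : ℕ} (hx : nxt h l x = nxt h l' x) (hy : nxt h l y = nxt h l' y) :
    Btilde C ε h l x y = Btilde C ε h l' x y := by
  unfold Btilde condI condII condIII condIV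
  rw [hx, hy]

lemma eq_of_nxt_lt {l x y : ℕ} (hxy : nxt h l y < nxt h l x) :
    Btilde C ε h l x y =
      if nxt h l y = x then -ε x
      else if ∃ y1 : ℕ, nxt h l y = y1 ∧ ε y = -ε y1 ∧ x < y ∧ y < y1 then ε y * C (h x) (h y)
      else if ∃ y1 : ℕ, nxt h l y = y1 ∧ ε y1 = ε x ∧ y < x ∧ x < y1 then -(ε x * C (h x) (h y))
      else 0 := by
  have hx_ne : nxt h l x ≠ y := fun he => (hxy.trans_le he.le).not_ge (lt_nxt l y).le
  have hI : ¬ condI ε h l x y := fun ⟨_, hx1, _, _, _, hlt⟩ => (hx1 ▸ hlt).not_gt hxy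
  have hIV : ¬ condIV ε h l x y := fun ⟨_, hx1, _, _, _, hlt⟩ => (hx1 ▸ hlt).not_gt hxy
  have hII : condII ε h l x y ↔ ∃ y1 : ℕ, nxt h l y = y1 ∧ ε y = -ε y1 ∧ x < y ∧ y < y1 :=
    ⟨fun ⟨y1, h1, h2, h3, h4, _⟩ => ⟨y1, h1, h2, h3, h4⟩,
      fun ⟨y1, h1, h2, h3, h4⟩ => ⟨y1, h1, h2, h3, h4, h1 ▸ hxy⟩⟩
  have hIII : condIII ε h l x y ↔ ∃ y1 : ℕ, nxt h l y = y1 ∧ ε y1 = ε x ∧ y < x ∧ x < y1 :=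
    ⟨fun ⟨y1, h1, h2, h3, h4, _⟩ => ⟨y1, h1, h2, h3, h4⟩,
      fun ⟨y1, h1, h2, h3, h4⟩ => ⟨y1, h1, h2, h3, h4, h1 ▸ hxy⟩⟩
  simp only [Btilde, if_neg hx_ne, hI, hIV, hII, hIII, false_or, or_false]

theorem eq_of_nxt_le {s t x y : ℕ} (hst : s ≤ t) (hy : nxt h s y ≤ s) :
    Btilde C ε h t x y = Btilde C ε h s x y := by
  have hy_eq : nxt h t y = nxt h s y := nxt_eq_of_le hst hy
  rcases nxt_le_or_lt_nxt (h := h) s s x with hx | hx_s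
  · exact congr_nxt C ε (nxt_eq_of_le hst hx) hy_eq
  · have hx_t : (s : ℕ∞) < nxt h t x := (nxt_le_or_lt_nxt s t x).resolve_left hx_s.not_ge
    rw [eq_of_nxt_lt C ε (hy_eq ▸ hy.trans_lt hx_t), eq_of_nxt_lt C ε (hy.trans_lt hx_s), hy_eq]

end Btilde

theorem subchain_matrix_stabilizes_general {I : Type*} (C : I → I → ℤ)
    (i : ℤ → I) (c : ℤ) (E : ℕ → Bool)
    (s : ℕ) (x y : ℕ)
    (hy : y ∈ Kex (colorP i c E) s) (t : ℕ) (hts : s ≤ t) :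
    Btilde C (epsP E) (colorP i c E) t x y
      = Btilde C (epsP E) (colorP i c E) s x y := by
  obtain ⟨-, y', hyy', hy's, hy'⟩ := hy
  exact Btilde.eq_of_nxt_le C (epsP E) hts
    ((nxt_le_of_mem hyy' hy's hy').trans (by exact_mod_cast hy's))

/-- Stabilization for infinite chains: for a chain of `i`-boxes of
infinite length with data `(c, E)` and its length-`s` subchains, the entries of the
exchange matrices `B(𝔠_t)` on `K(𝔠_s) × K^ex(𝔠_s)` agree with those of `B(𝔠_s)` for
all `t ≥ s`; hence the colimit matrix `B(𝔠)` is well defined. -/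
theorem subchain_matrix_stabilizes {I : Type*} (C : I → I → ℤ)
    (hC2 : ∀ x, C x x = 2) (hCneg : ∀ x y, x ≠ y → C x y ≤ 0)
    (i : ℤ → I) (hocc : OccAll i) (c : ℤ) (E : ℕ → Bool)
    (s : ℕ) (hs : 1 ≤ s) (x y : ℕ) (hx1 : 1 ≤ x) (hxs : x ≤ s)
    (hy : y ∈ Kex (colorP i c E) s) (t : ℕ) (hts : s ≤ t) :
    Btilde C (epsP E) (colorP i c E) t x y
      = Btilde C (epsP E) (colorP i c E) s x y :=
  subchain_matrix_stabilizes_general C i c E s x y hy t hts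
end
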